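/- arXiv:1703.01092 — 3 statements merged into one kernel-verified Lean document; each statement's English description precedes it below -/
import Mathlib

section
/- Let D > 0 and let f : ℝ → ℝ be a fixed measurable encoder. Suppose g* : {0,1} × ℝ → ℝ is a measurable decoder such that for every y ∈ {0,1} and u ∈ ℝ, g*(y,u) maximizes over v̂ ∈ ℝ the quantity ∫_{v̂−√D}^{v̂+√D} Φ(v/σ_v | u/σ_u) Q((−1)^{y+1} f(v)/σ_w) dv. Then for every measurable decoder g : {0,1} × ℝ → ℝ, Pr((V − g*(Y,U))² ≥ D) ≤ Pr((V − g(Y,U))² ≥ D). -/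
open MeasureTheory ProbabilityTheory Real Set

noncomputable section

/-- Standard normal complementary CDF `Q(z) = (1/√(2π)) ∫_z^∞ e^{-x²/2} dx`. -/
def gaussQ (z : ℝ) : ℝ := (1 / Real.sqrt (2 * π)) * ∫ x in Set.Ioi z, Real.exp (-x ^ 2 / 2)

/-- Conditional standard bivariate normal density with correlation `r`:
`Φ(v|u) = (1/√(2π(1-r²))) exp(-(v-ru)²/(2(1-r²)))`. -/
def condPhi (r v u : ℝ) : ℝ :=
  (1 / Real.sqrt (2 * π * (1 - r ^ 2))) * Real.exp (-(v - r * u) ^ 2 / (2 * (1 - r ^ 2)))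

/-- Standard bivariate normal density with correlation `r`. -/
def jointPhi (r v u : ℝ) : ℝ :=
  (1 / (2 * π * Real.sqrt (1 - r ^ 2))) *
    Real.exp (-(v ^ 2 + u ^ 2 - 2 * r * v * u) / (2 * (1 - r ^ 2)))

/-- `(V,U)` are jointly Gaussian, zero mean, with variances `σv²`, `σu²` and
correlation coefficient `r`, expressed through the joint density
`(1/(σv σu)) Φ(v/σv, u/σu)`. -/
def JointGaussianVU {Ω : Type*} [MeasurableSpace Ω] (P : Measure Ω)
    (σv σu r : ℝ) (V U : Ω → ℝ) : Prop :=
  P.map (fun ω => (V ω, U ω)) =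
    (volume : Measure (ℝ × ℝ)).withDensity
      (fun p => ENNReal.ofReal ((1 / (σv * σu)) * jointPhi r (p.1 / σv) (p.2 / σu)))

/-- `W` is a zero-mean Gaussian with variance `σw²`. -/
def GaussianNoise {Ω : Type*} [MeasurableSpace Ω] (P : Measure Ω)
    (σw : ℝ) (W : Ω → ℝ) : Prop :=
  P.map W =
    (volume : Measure ℝ).withDensity
      (fun w => ENNReal.ofReal
        ((1 / (σw * Real.sqrt (2 * π))) * Real.exp (-w ^ 2 / (2 * σw ^ 2))))

/-- The MMSE decoder `g_f(y,u)` associated with the encoder `f`. -/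
def mmseDec (σv σu σw r : ℝ) (f : ℝ → ℝ) (y : ℕ) (u : ℝ) : ℝ :=
  (∫ v, v * condPhi r (v / σv) (u / σu) * gaussQ ((-1 : ℝ) ^ (y + 1) * f v / σw)) /
    (∫ v, condPhi r (v / σv) (u / σu) * gaussQ ((-1 : ℝ) ^ (y + 1) * f v / σw))

/-- The DOP objective maximized by the optimal decoder:
`∫_{v̂-√D}^{v̂+√D} Φ(v/σv | u/σu) Q((-1)^{y+1} f(v)/σw) dv`. -/
def dopObj (σv σu σw r : ℝ) (f : ℝ → ℝ) (D : ℝ) (y : ℕ) (u vhat : ℝ) : ℝ :=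
  ∫ v in (vhat - Real.sqrt D)..(vhat + Real.sqrt D),
    condPhi r (v / σv) (u / σu) * gaussQ ((-1 : ℝ) ^ (y + 1) * f v / σw)

/-! ### Auxiliary lemmas -/

lemma expsq_integrable : Integrable (fun x : ℝ => rexp (-x ^ 2 / 2)) := by
  have h : Integrable (fun x : ℝ => rexp (-(1/2) * x ^ 2)) volume :=
    integrable_exp_neg_mul_sq one_half_pos
  exact h.congr (Filter.Eventually.of_forall fun x => congrArg rexp (by ring))

lemma gaussQ_nonneg (z : ℝ) : 0 ≤ gaussQ z := by
  unfold gaussQ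
  refine mul_nonneg (by positivity) ?_
  exact setIntegral_nonneg measurableSet_Ioi fun x _ => (Real.exp_pos _).le

lemma gaussQ_antitone : Antitone gaussQ := by
  intro a b hab
  unfold gaussQ
  refine mul_le_mul_of_nonneg_left ?_ (by positivity)
  refine setIntegral_mono_set expsq_integrable.integrableOn
    (Filter.Eventually.of_forall fun x => (Real.exp_pos _).le) ?_
  exact HasSubset.Subset.eventuallyLE (Ioi_subset_Ioi hab)

lemma gaussQ_le (z : ℝ) : gaussQ z ≤ (1 / Real.sqrt (2 * π)) * ∫ x, rexp (-x ^ 2 / 2) := by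
  unfold gaussQ
  refine mul_le_mul_of_nonneg_left ?_ (by positivity)
  exact setIntegral_le_integral expsq_integrable
    (Filter.Eventually.of_forall fun x => (Real.exp_pos _).le)

lemma gaussQ_measurable : Measurable gaussQ := gaussQ_antitone.measurable

lemma condPhi_nonneg (r v u : ℝ) : 0 ≤ condPhi r v u := by
  unfold condPhi; positivity

lemma condPhi_le {r : ℝ} (hr2 : r ^ 2 < 1) (v u : ℝ) :
    condPhi r v u ≤ 1 / Real.sqrt (2 * π * (1 - r ^ 2)) := by
  unfold condPhi
  have h1 : rexp (-(v - r * u) ^ 2 / (2 * (1 - r ^ 2))) ≤ 1 := by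
    rw [Real.exp_le_one_iff]
    apply div_nonpos_of_nonpos_of_nonneg (neg_nonpos.mpr (sq_nonneg _)) (by nlinarith)
  exact mul_le_of_le_one_right (by positivity) h1

lemma condPhi_measurable (r σv σu u : ℝ) :
    Measurable fun v => condPhi r (v / σv) (u / σu) := by
  unfold condPhi
  fun_prop

lemma jointPhi_factor {r : ℝ} (hr2 : r ^ 2 < 1) (a b : ℝ) :
    jointPhi r a b = ((1 / Real.sqrt (2 * π)) * rexp (-b ^ 2 / 2)) * condPhi r a b := by
  unfold jointPhi condPhi
  have h2π : (0:ℝ) < 2 * π := by positivity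
  have hpos : (0:ℝ) < 1 - r ^ 2 := by linarith
  have hsqrt : Real.sqrt (2 * π * (1 - r ^ 2)) = Real.sqrt (2 * π) * Real.sqrt (1 - r ^ 2) :=
    Real.sqrt_mul h2π.le _
  have hss : Real.sqrt (2 * π) * Real.sqrt (2 * π) = 2 * π := Real.mul_self_sqrt h2π.le
  have hexp : rexp (-b ^ 2 / 2) * rexp (-(a - r * b) ^ 2 / (2 * (1 - r ^ 2)))
      = rexp (-(a ^ 2 + b ^ 2 - 2 * r * a * b) / (2 * (1 - r ^ 2))) := by
    rw [← Real.exp_add]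
    congr 1
    field_simp
    ring
  rw [mul_mul_mul_comm, hexp, hsqrt]
  congr 1
  rw [div_mul_div_comm, one_mul, ← mul_assoc, hss]

lemma gaussW_integrable {σw : ℝ} (hσw : 0 < σw) :
    Integrable (fun w : ℝ => 1 / (σw * Real.sqrt (2 * π)) * rexp (-w ^ 2 / (2 * σw ^ 2))) := by
  have h : Integrable (fun x : ℝ => rexp (-(1 / (2 * σw ^ 2)) * x ^ 2)) volume :=
    integrable_exp_neg_mul_sq (by positivity)
  refine ((h.congr (Filter.Eventually.of_forall fun x => congrArg rexp (by ring))).const_mul _)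

lemma gauss_integral_Ici {σw : ℝ} (hσw : 0 < σw) (a : ℝ) :
    ∫ w in Ici a, 1 / (σw * Real.sqrt (2 * π)) * rexp (-w ^ 2 / (2 * σw ^ 2))
      = gaussQ (a / σw) := by
  rw [integral_Ici_eq_integral_Ioi]
  have h1 : ∀ w : ℝ, 1 / (σw * Real.sqrt (2 * π)) * rexp (-w ^ 2 / (2 * σw ^ 2))
      = 1 / (σw * Real.sqrt (2 * π)) * rexp (-(σw⁻¹ * w) ^ 2 / 2) := by
    intro w
    have : (-(σw⁻¹ * w) ^ 2 / 2) = -w ^ 2 / (2 * σw ^ 2) := by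
      rw [mul_pow, inv_pow]
      field_simp
    rw [this]
  simp_rw [h1]
  rw [integral_comp_mul_left_Ioi
    (fun x => 1 / (σw * Real.sqrt (2 * π)) * rexp (-x ^ 2 / 2)) a (inv_pos.mpr hσw)]
  rw [inv_inv, smul_eq_mul, integral_const_mul]
  unfold gaussQ
  rw [div_eq_inv_mul a σw]
  have hs : Real.sqrt (2 * π) ≠ 0 := ne_of_gt (Real.sqrt_pos.mpr (by positivity))
  field_simp

lemma gauss_integral_Iio {σw : ℝ} (hσw : 0 < σw) (a : ℝ) :
    ∫ w in Iio a, 1 / (σw * Real.sqrt (2 * π)) * rexp (-w ^ 2 / (2 * σw ^ 2))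
      = gaussQ (-a / σw) := by
  have heven : ∀ w : ℝ, 1 / (σw * Real.sqrt (2 * π)) * rexp (-(-w) ^ 2 / (2 * σw ^ 2))
      = 1 / (σw * Real.sqrt (2 * π)) * rexp (-w ^ 2 / (2 * σw ^ 2)) := by
    intro w; rw [neg_sq]
  calc ∫ w in Iio a, 1 / (σw * Real.sqrt (2 * π)) * rexp (-w ^ 2 / (2 * σw ^ 2))
      = ∫ w in Iic a, 1 / (σw * Real.sqrt (2 * π)) * rexp (-w ^ 2 / (2 * σw ^ 2)) :=
        (integral_Iic_eq_integral_Iio).symm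
    _ = ∫ w in Iic a, 1 / (σw * Real.sqrt (2 * π)) * rexp (-(-w) ^ 2 / (2 * σw ^ 2)) := by
        simp_rw [heven]
    _ = ∫ w in Ioi (-a), 1 / (σw * Real.sqrt (2 * π)) * rexp (-w ^ 2 / (2 * σw ^ 2)) :=
        integral_comp_neg_Iic a (fun w => 1 / (σw * Real.sqrt (2 * π)) * rexp (-w ^ 2 / (2 * σw ^ 2)))
    _ = ∫ w in Ici (-a), 1 / (σw * Real.sqrt (2 * π)) * rexp (-w ^ 2 / (2 * σw ^ 2)) :=
        (integral_Ici_eq_integral_Ioi).symm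
    _ = gaussQ (-a / σw) := gauss_integral_Ici hσw (-a)

/-- Abbreviation for `Q((-1)^{y+1} f(v)/σw)`. -/
def gqF (σw : ℝ) (f : ℝ → ℝ) (y : ℕ) (v : ℝ) : ℝ := gaussQ ((-1 : ℝ) ^ (y + 1) * f v / σw)

/-- The `u`-marginal factor of the joint density. -/
def cF (σv σu : ℝ) (u : ℝ) : ℝ :=
  1 / (σv * σu) * (1 / Real.sqrt (2 * π) * rexp (-(u / σu) ^ 2 / 2))

lemma gqF_measurable {σw : ℝ} {f : ℝ → ℝ} (hf : Measurable f) (y : ℕ) :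
    Measurable (gqF σw f y) :=
  gaussQ_measurable.comp ((hf.const_mul _).div_const σw)

lemma gqF_nonneg (σw : ℝ) (f : ℝ → ℝ) (y : ℕ) (v : ℝ) : 0 ≤ gqF σw f y v :=
  gaussQ_nonneg _

lemma cF_nonneg {σv σu : ℝ} (hσv : 0 < σv) (hσu : 0 < σu) (u : ℝ) : 0 ≤ cF σv σu u := by
  unfold cF; positivity

set_option maxHeartbeats 8000000 in
/-- Optimality of the decoder under the DOP criterion (Proposition 3): if for every
`y ∈ {0,1}` and `u` the value `g*(y,u)` maximizes the DOP objective, then the decoder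
`g*` achieves the smallest distortion outage probability among all measurable decoders. -/
theorem dop_optimal_decoder
    {Ω : Type*} [MeasurableSpace Ω] (P : Measure Ω) [IsProbabilityMeasure P]
    (σv σu σw r D : ℝ) (hσv : 0 < σv) (hσu : 0 < σu) (hσw : 0 < σw)
    (hr : r ∈ Set.Ioo (-1 : ℝ) 1) (hD : 0 < D)
    (V U W : Ω → ℝ) (hV : Measurable V) (hU : Measurable U) (hWm : Measurable W)
    (hVU : JointGaussianVU P σv σu r V U) (hW : GaussianNoise P σw W)
    (hindep : IndepFun (fun ω => (V ω, U ω)) W P)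
    (f : ℝ → ℝ) (hf : Measurable f)
    (g0s g1s : ℝ → ℝ) (hg0s : Measurable g0s) (hg1s : Measurable g1s)
    (hmax0 : ∀ u vhat : ℝ, dopObj σv σu σw r f D 0 u vhat ≤ dopObj σv σu σw r f D 0 u (g0s u))
    (hmax1 : ∀ u vhat : ℝ, dopObj σv σu σw r f D 1 u vhat ≤ dopObj σv σu σw r f D 1 u (g1s u)) :
    ∀ g0 g1 : ℝ → ℝ, Measurable g0 → Measurable g1 →
      P {ω | D ≤ (V ω - (if 0 ≤ f (V ω) + W ω then g0s (U ω) else g1s (U ω))) ^ 2} ≤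
        P {ω | D ≤ (V ω - (if 0 ≤ f (V ω) + W ω then g0 (U ω) else g1 (U ω))) ^ 2} := by
  intro g0 g1 hg0 hg1
  have hr2 : r ^ 2 < 1 := by
    obtain ⟨h1, h2⟩ := hr
    nlinarith
  have hs : 0 < Real.sqrt D := Real.sqrt_pos.mpr hD
  have hDs : D = Real.sqrt D ^ 2 := (Real.sq_sqrt hD.le).symm
  have hfac : ∀ v u : ℝ, 1 / (σv * σu) * jointPhi r (v / σv) (u / σu)
      = cF σv σu u * condPhi r (v / σv) (u / σu) := by
    intro v u
    rw [jointPhi_factor hr2]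
    unfold cF
    ring
  -- dopObj as an integral over Ioo
  have hdop : ∀ (y : ℕ) (u vhat : ℝ), dopObj σv σu σw r f D y u vhat
      = ∫ v in Ioo (vhat - Real.sqrt D) (vhat + Real.sqrt D),
          condPhi r (v / σv) (u / σu) * gqF σw f y v := by
    intro y u vhat
    unfold dopObj gqF
    rw [intervalIntegral.integral_of_le (by linarith), integral_Ioc_eq_integral_Ioo]
  -- W marginal computations
  have hWset : ∀ (t : Set ℝ), MeasurableSet t →
      P.map W t = ENNReal.ofReal
        (∫ w in t, 1 / (σw * Real.sqrt (2 * π)) * rexp (-w ^ 2 / (2 * σw ^ 2))) := by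
    intro t ht
    rw [hW, withDensity_apply _ ht,
      ← ofReal_integral_eq_lintegral_ofReal (gaussW_integrable hσw).integrableOn
      (Filter.Eventually.of_forall fun w => by positivity)]
  have hW0 : ∀ v : ℝ, P.map W (Ici (-(f v))) = ENNReal.ofReal (gqF σw f 0 v) := by
    intro v
    rw [hWset _ measurableSet_Ici, gauss_integral_Ici hσw]
    unfold gqF
    congr 2
    norm_num
  have hW1 : ∀ v : ℝ, P.map W (Iio (-(f v))) = ENNReal.ofReal (gqF σw f 1 v) := by
    intro v
    rw [hWset _ measurableSet_Iio, gauss_integral_Iio hσw]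
    unfold gqF
    congr 2
    norm_num
  -- the key identity for the success probability
  have hkey : ∀ g0 g1 : ℝ → ℝ, Measurable g0 → Measurable g1 →
      P {ω | (V ω - (if 0 ≤ f (V ω) + W ω then g0 (U ω) else g1 (U ω))) ^ 2 < D}
      = ∫⁻ u, ENNReal.ofReal (cF σv σu u) *
          (ENNReal.ofReal (∫ v in Ioo (g0 u - Real.sqrt D) (g0 u + Real.sqrt D),
              condPhi r (v / σv) (u / σu) * gqF σw f 0 v)
           + ENNReal.ofReal (∫ v in Ioo (g1 u - Real.sqrt D) (g1 u + Real.sqrt D),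
              condPhi r (v / σv) (u / σu) * gqF σw f 1 v)) := by
    intro g0 g1 hg0 hg1
    set S : Set ((ℝ × ℝ) × ℝ) :=
      {p | (p.1.1 - (if 0 ≤ f p.1.1 + p.2 then g0 p.1.2 else g1 p.1.2)) ^ 2 < D} with hSdef
    have hcond : MeasurableSet {p : (ℝ × ℝ) × ℝ | 0 ≤ f p.1.1 + p.2} :=
      measurableSet_le measurable_const
        ((hf.comp (measurable_fst.comp measurable_fst)).add measurable_snd)
    have hite : Measurable fun p : (ℝ × ℝ) × ℝ =>
        if 0 ≤ f p.1.1 + p.2 then g0 p.1.2 else g1 p.1.2 :=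
      Measurable.ite hcond (hg0.comp (measurable_snd.comp measurable_fst))
        (hg1.comp (measurable_snd.comp measurable_fst))
    have hS : MeasurableSet S :=
      measurableSet_lt (((measurable_fst.comp measurable_fst).sub hite).pow_const 2)
        measurable_const
    have hpair : Measurable fun ω => ((V ω, U ω), W ω) := (hV.prodMk hU).prodMk hWm
    have : IsProbabilityMeasure (P.map W) := Measure.isProbabilityMeasure_map hWm.aemeasurable
    have hmapped : P {ω | (V ω - (if 0 ≤ f (V ω) + W ω then g0 (U ω) else g1 (U ω))) ^ 2 < D}
        = ((P.map fun ω => (V ω, U ω)).prod (P.map W)) S := by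
      rw [← (indepFun_iff_map_prod_eq_prod_map_map (hV.prodMk hU).aemeasurable
        hWm.aemeasurable).mp hindep, Measure.map_apply hpair hS]
      rfl
    rw [hmapped, Measure.prod_apply hS]
    -- compute sections
    have hsec : ∀ p : ℝ × ℝ, (P.map W) (Prod.mk p ⁻¹' S) =
        (if (p.1 - g0 p.2) ^ 2 < D then ENNReal.ofReal (gqF σw f 0 p.1) else 0)
        + (if (p.1 - g1 p.2) ^ 2 < D then ENNReal.ofReal (gqF σw f 1 p.1) else 0) := by
      rintro ⟨v, u⟩
      have hset : Prod.mk (v, u) ⁻¹' S =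
          (if (v - g0 u) ^ 2 < D then Ici (-(f v)) else (∅ : Set ℝ))
          ∪ (if (v - g1 u) ^ 2 < D then Iio (-(f v)) else ∅) := by
        ext w
        by_cases hw : 0 ≤ f v + w
        · have hw' : -(f v) ≤ w := by linarith
          by_cases h0 : (v - g0 u) ^ 2 < D <;>
            simp [hSdef, hw, h0, hw', not_lt.mpr hw']
        · have hw' : w < -(f v) := by linarith
          by_cases h1 : (v - g1 u) ^ 2 < D <;>
            simp [hSdef, hw, h1, hw', not_le.mpr hw']
      have hsub0 : (if (v - g0 u) ^ 2 < D then Ici (-(f v)) else (∅ : Set ℝ)) ⊆ Ici (-(f v)) := by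
        split <;> simp
      have hsub1 : (if (v - g1 u) ^ 2 < D then Iio (-(f v)) else (∅ : Set ℝ)) ⊆ Iio (-(f v)) := by
        split <;> simp
      have hdisj : Disjoint (if (v - g0 u) ^ 2 < D then Ici (-(f v)) else (∅ : Set ℝ))
          (if (v - g1 u) ^ 2 < D then Iio (-(f v)) else ∅) :=
        Disjoint.mono hsub0 hsub1 (Iio_disjoint_Ici le_rfl).symm
      have hm1 : MeasurableSet (if (v - g1 u) ^ 2 < D then Iio (-(f v)) else (∅ : Set ℝ)) := by
        split
        · exact measurableSet_Iio
        · exact MeasurableSet.empty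
      rw [hset, measure_union hdisj hm1, apply_ite (P.map W), apply_ite (P.map W),
        measure_empty, hW0 v, hW1 v]
    rw [lintegral_congr hsec]
    -- plug in the joint density
    rw [hVU]
    have hdensmeas : Measurable fun p : ℝ × ℝ =>
        ENNReal.ofReal (1 / (σv * σu) * jointPhi r (p.1 / σv) (p.2 / σu)) := by
      apply ENNReal.measurable_ofReal.comp
      unfold jointPhi
      fun_prop
    have hA0 : MeasurableSet {p : ℝ × ℝ | (p.1 - g0 p.2) ^ 2 < D} :=
      measurableSet_lt ((measurable_fst.sub (hg0.comp measurable_snd)).pow_const 2)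
        measurable_const
    have hA1 : MeasurableSet {p : ℝ × ℝ | (p.1 - g1 p.2) ^ 2 < D} :=
      measurableSet_lt ((measurable_fst.sub (hg1.comp measurable_snd)).pow_const 2)
        measurable_const
    have hGmeas : Measurable fun p : ℝ × ℝ =>
        (if (p.1 - g0 p.2) ^ 2 < D then ENNReal.ofReal (gqF σw f 0 p.1) else 0)
        + (if (p.1 - g1 p.2) ^ 2 < D then ENNReal.ofReal (gqF σw f 1 p.1) else 0) := by
      refine Measurable.add ?_ ?_
      · exact Measurable.ite hA0
          ((ENNReal.measurable_ofReal.comp (gqF_measurable hf 0)).comp measurable_fst)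
          measurable_const
      · exact Measurable.ite hA1
          ((ENNReal.measurable_ofReal.comp (gqF_measurable hf 1)).comp measurable_fst)
          measurable_const
    rw [lintegral_withDensity_eq_lintegral_mul _ hdensmeas hGmeas]
    simp only [Pi.mul_apply]
    rw [Measure.volume_eq_prod]
    rw [lintegral_prod_symm (fun p : ℝ × ℝ =>
      ENNReal.ofReal (1 / (σv * σu) * jointPhi r (p.1 / σv) (p.2 / σu)) *
        ((if (p.1 - g0 p.2) ^ 2 < D then ENNReal.ofReal (gqF σw f 0 p.1) else 0)
          + (if (p.1 - g1 p.2) ^ 2 < D then ENNReal.ofReal (gqF σw f 1 p.1) else 0)))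
      ((hdensmeas.mul hGmeas).aemeasurable)]
    refine lintegral_congr fun u => ?_
    -- inner integral over v, for fixed u
    have hmem : ∀ (a v : ℝ), v ∈ Ioo (a - Real.sqrt D) (a + Real.sqrt D) ↔ (v - a) ^ 2 < D := by
      intro a v
      rw [mem_Ioo]
      constructor
      · rintro ⟨h1, h2⟩; rw [hDs]; nlinarith
      · intro h; rw [hDs] at h; constructor <;> nlinarith
    have hogq : ∀ (y : ℕ) (v : ℝ),
        ENNReal.ofReal (condPhi r (v / σv) (u / σu) * gqF σw f y v)
          = ENNReal.ofReal (condPhi r (v / σv) (u / σu)) * ENNReal.ofReal (gqF σw f y v) :=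
      fun y v => ENNReal.ofReal_mul (condPhi_nonneg _ _ _)
    have hpt : ∀ v : ℝ,
        (fun p : ℝ × ℝ =>
          ENNReal.ofReal (1 / (σv * σu) * jointPhi r (p.1 / σv) (p.2 / σu)) *
            ((if (p.1 - g0 p.2) ^ 2 < D then ENNReal.ofReal (gqF σw f 0 p.1) else 0)
              + (if (p.1 - g1 p.2) ^ 2 < D then ENNReal.ofReal (gqF σw f 1 p.1) else 0))) (v, u)
        = ENNReal.ofReal (cF σv σu u) *
            ((Ioo (g0 u - Real.sqrt D) (g0 u + Real.sqrt D)).indicator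
                (fun v => ENNReal.ofReal (condPhi r (v / σv) (u / σu) * gqF σw f 0 v)) v
             + (Ioo (g1 u - Real.sqrt D) (g1 u + Real.sqrt D)).indicator
                (fun v => ENNReal.ofReal (condPhi r (v / σv) (u / σu) * gqF σw f 1 v)) v) := by
      intro v
      simp only [Set.indicator_apply, hmem]
      rw [hfac v u, ENNReal.ofReal_mul (cF_nonneg hσv hσu u)]
      simp only [hogq, mul_ite, mul_zero, mul_add, mul_assoc]
    rw [lintegral_congr hpt]
    have hindmeas : ∀ (y : ℕ) (a b : ℝ), Measurable ((Ioo a b).indicator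
        (fun v => ENNReal.ofReal (condPhi r (v / σv) (u / σu) * gqF σw f y v))) :=
      fun y a b => ((ENNReal.measurable_ofReal.comp
        ((condPhi_measurable r σv σu u).mul (gqF_measurable hf y)))).indicator
        measurableSet_Ioo
    rw [lintegral_const_mul' _ _ ENNReal.ofReal_ne_top]
    rw [lintegral_add_left (hindmeas 0 _ _)]
    rw [lintegral_indicator measurableSet_Ioo, lintegral_indicator measurableSet_Ioo]
    have hInt : ∀ (y : ℕ) (a b : ℝ),
        IntegrableOn (fun v => condPhi r (v / σv) (u / σu) * gqF σw f y v) (Ioo a b) := by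
      intro y a b
      have hconstInt : Integrable (fun _ : ℝ => (1 / Real.sqrt (2 * π * (1 - r ^ 2))) *
          ((1 / Real.sqrt (2 * π)) * ∫ x, rexp (-x ^ 2 / 2))) (volume.restrict (Ioo a b)) :=
        (integrableOn_const_iff).mpr (Or.inr measure_Ioo_lt_top)
      refine Integrable.mono' hconstInt
        (((condPhi_measurable r σv σu u).mul (gqF_measurable hf y)).aestronglyMeasurable)
        (Filter.Eventually.of_forall fun v => ?_)
      rw [Real.norm_eq_abs, abs_of_nonneg (mul_nonneg (condPhi_nonneg _ _ _)
        (gqF_nonneg σw f y v))]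
      exact mul_le_mul (condPhi_le hr2 _ _) (gaussQ_le _) (gqF_nonneg σw f y v) (by positivity)
    rw [← ofReal_integral_eq_lintegral_ofReal (hInt 0 _ _)
        (Filter.Eventually.of_forall fun v =>
          mul_nonneg (condPhi_nonneg _ _ _) (gqF_nonneg σw f 0 v)),
      ← ofReal_integral_eq_lintegral_ofReal (hInt 1 _ _)
        (Filter.Eventually.of_forall fun v =>
          mul_nonneg (condPhi_nonneg _ _ _) (gqF_nonneg σw f 1 v))]
  -- measurability of the success sets
  have hsuccmeas : ∀ g0 g1 : ℝ → ℝ, Measurable g0 → Measurable g1 →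
      MeasurableSet {ω | (V ω - (if 0 ≤ f (V ω) + W ω then g0 (U ω) else g1 (U ω))) ^ 2 < D} := by
    intro g0 g1 hg0 hg1
    have hcond : MeasurableSet {ω | 0 ≤ f (V ω) + W ω} :=
      measurableSet_le measurable_const ((hf.comp hV).add hWm)
    have hite : Measurable fun ω => if 0 ≤ f (V ω) + W ω then g0 (U ω) else g1 (U ω) :=
      Measurable.ite hcond (hg0.comp hU) (hg1.comp hU)
    exact measurableSet_lt ((hV.sub hite).pow_const 2) measurable_const
  -- the complement identity
  have hcompl : ∀ g0 g1 : ℝ → ℝ, Measurable g0 → Measurable g1 →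
      P {ω | D ≤ (V ω - (if 0 ≤ f (V ω) + W ω then g0 (U ω) else g1 (U ω))) ^ 2}
      = 1 - P {ω | (V ω - (if 0 ≤ f (V ω) + W ω then g0 (U ω) else g1 (U ω))) ^ 2 < D} := by
    intro g0 g1 hg0 hg1
    have hset : {ω | D ≤ (V ω - (if 0 ≤ f (V ω) + W ω then g0 (U ω) else g1 (U ω))) ^ 2}
        = {ω | (V ω - (if 0 ≤ f (V ω) + W ω then g0 (U ω) else g1 (U ω))) ^ 2 < D}ᶜ := by
      ext ω; simp [not_lt]
    rw [hset, prob_compl_eq_one_sub (hsuccmeas g0 g1 hg0 hg1)]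
  rw [hcompl g0s g1s hg0s hg1s, hcompl g0 g1 hg0 hg1]
  refine tsub_le_tsub_left ?_ 1
  rw [hkey g0s g1s hg0s hg1s, hkey g0 g1 hg0 hg1]
  refine lintegral_mono fun u => ?_
  refine mul_le_mul_right (add_le_add ?_ ?_) _
  · have h := hmax0 u (g0 u)
    rw [hdop 0 u (g0 u), hdop 0 u (g0s u)] at h
    exact ENNReal.ofReal_le_ofReal h
  · have h := hmax1 u (g1 u)
    rw [hdop 1 u (g1 u), hdop 1 u (g1s u)] at h
    exact ENNReal.ofReal_le_ofReal h

end
end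

section
/- Let D > 0, let f : ℝ → ℝ be a measurable encoder and g : {0,1} × ℝ → ℝ a measurable decoder, and for u ∈ ℝ and y ∈ {0,1} set I_y(u) = {v ∈ ℝ : (v − g(y,u))² < D}. Then Pr((V − g(Y,U))² ≥ D) = (1/(σ_v σ_u)) ∫_ℝ ∫_ℝ Φ(v/σ_v, u/σ_u) G(u,v,f(v)) dv du, where G(u,v,x) = Q(x/σ_w) if v ∈ I₀(u)∖I₁(u); G(u,v,x) = Q(−x/σ_w) if v ∈ I₁(u)∖I₀(u); G(u,v,x) = 1 if v ∉ I₀(u) ∪ I₁(u); and G(u,v,x) = 0 if v ∈ I₀(u) ∩ I₁(u). -/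
open MeasureTheory ProbabilityTheory Real Set

noncomputable section

/-- The integrand `G(u,v,x)` of the DOP: `Q(x/σw)` on `I₀(u)∖I₁(u)`, `Q(-x/σw)` on
`I₁(u)∖I₀(u)`, `1` outside `I₀(u) ∪ I₁(u)` and `0` on `I₀(u) ∩ I₁(u)`, where
`I_y(u) = {v : (v - g(y,u))² < D}`. -/
def outageG (σw D : ℝ) (g0 g1 : ℝ → ℝ) (u v x : ℝ) : ℝ :=
  if (v - g0 u) ^ 2 < D ∧ ¬(v - g1 u) ^ 2 < D then gaussQ (x / σw)
  else if (v - g1 u) ^ 2 < D ∧ ¬(v - g0 u) ^ 2 < D then gaussQ (-x / σw)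
  else if ¬(v - g0 u) ^ 2 < D ∧ ¬(v - g1 u) ^ 2 < D then 1
  else 0


lemma exp_neg_sq_integrable : Integrable (fun x : ℝ => Real.exp (-x ^ 2 / 2)) := by
  have he : (fun x : ℝ => Real.exp (-x ^ 2 / 2)) = fun x : ℝ => Real.exp (-(1/2 : ℝ) * x ^ 2) := by
    funext x; congr 1; ring
  rw [he]
  exact integrable_exp_neg_mul_sq (by norm_num : (0:ℝ) < 1/2)

lemma integral_exp_neg_sq : ∫ x : ℝ, Real.exp (-x ^ 2 / 2) = Real.sqrt (2 * π) := by
  have h := integral_gaussian (1/2 : ℝ)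
  rw [show π / (1/2 : ℝ) = 2 * π by ring] at h
  rw [← h]
  congr 1 with x
  congr 1; ring

lemma gaussQ_le_one (z : ℝ) : gaussQ z ≤ 1 := by
  have hs : 0 < Real.sqrt (2*π) := Real.sqrt_pos.mpr (by positivity)
  have h1 : ∫ x in Set.Ioi z, Real.exp (-x^2/2) ≤ Real.sqrt (2*π) := by
    rw [← integral_exp_neg_sq]
    exact setIntegral_le_integral exp_neg_sq_integrable
      (Filter.Eventually.of_forall fun x => (Real.exp_pos _).le)
  calc gaussQ z ≤ (1 / Real.sqrt (2*π)) * Real.sqrt (2*π) :=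
        mul_le_mul_of_nonneg_left h1 (by positivity)
    _ = 1 := by field_simp

lemma gdens_integrable {σ : ℝ} (hσ : 0 < σ) :
    Integrable (fun w : ℝ => (1 / (σ * Real.sqrt (2 * π))) * Real.exp (-w ^ 2 / (2 * σ ^ 2))) := by
  have hb : (0:ℝ) < (2*σ^2)⁻¹ := by positivity
  have he : (fun w : ℝ => (1 / (σ * Real.sqrt (2 * π))) * Real.exp (-w ^ 2 / (2 * σ ^ 2)))
      = fun w : ℝ => (1 / (σ * Real.sqrt (2 * π))) * Real.exp (-(2*σ^2)⁻¹ * w ^ 2) := by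
    funext w; congr 2; field_simp
  rw [he]
  exact (integrable_exp_neg_mul_sq hb).const_mul _

lemma gauss_tail_Ioi {σ : ℝ} (hσ : 0 < σ) (t : ℝ) :
    ∫ w in Set.Ioi t, (1 / (σ * Real.sqrt (2 * π))) * Real.exp (-w ^ 2 / (2 * σ ^ 2))
      = gaussQ (t / σ) := by
  have key : ∀ w : ℝ, Real.exp (-w ^ 2 / (2 * σ ^ 2)) = Real.exp (-(σ⁻¹ * w) ^ 2 / 2) := by
    intro w; congr 1
    rw [div_eq_div_iff (by positivity) (by norm_num)]
    rw [mul_pow]; field_simp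
  simp_rw [key]
  rw [integral_const_mul, integral_comp_mul_left_Ioi (fun x => Real.exp (-x^2/2)) t
    (inv_pos.mpr hσ)]
  have h2 : σ⁻¹ * t = t / σ := by ring
  rw [h2, inv_inv, smul_eq_mul]
  unfold gaussQ
  have hs : 0 < Real.sqrt (2*π) := Real.sqrt_pos.mpr (by positivity)
  field_simp

lemma gauss_tail_Iic {σ : ℝ} (hσ : 0 < σ) (t : ℝ) :
    ∫ w in Set.Iic t, (1 / (σ * Real.sqrt (2 * π))) * Real.exp (-w ^ 2 / (2 * σ ^ 2))
      = gaussQ (-t / σ) := by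
  have h := integral_comp_neg_Ioi (-t)
    (fun w : ℝ => (1 / (σ * Real.sqrt (2 * π))) * Real.exp (-w ^ 2 / (2 * σ ^ 2)))
  rw [neg_neg] at h
  rw [← h]
  simp_rw [show ∀ w : ℝ, -(-w) ^ 2 = -w ^ 2 from fun w => by ring]
  exact gauss_tail_Ioi hσ (-t)

/-- Integral representation of the distortion outage probability:
`Pr((V - g(Y,U))² ≥ D) = (1/(σv σu)) ∫∫ Φ(v/σv, u/σu) G(u,v,f(v)) dv du`. -/
theorem dop_integral_representation
    {Ω : Type*} [MeasurableSpace Ω] (P : Measure Ω) [IsProbabilityMeasure P]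
    (σv σu σw r D : ℝ) (hσv : 0 < σv) (hσu : 0 < σu) (hσw : 0 < σw)
    (hr : r ∈ Set.Ioo (-1 : ℝ) 1) (hD : 0 < D)
    (V U W : Ω → ℝ) (hV : Measurable V) (hU : Measurable U) (hWm : Measurable W)
    (hVU : JointGaussianVU P σv σu r V U) (hW : GaussianNoise P σw W)
    (hindep : IndepFun (fun ω => (V ω, U ω)) W P)
    (f : ℝ → ℝ) (hf : Measurable f)
    (g0 g1 : ℝ → ℝ) (hg0 : Measurable g0) (hg1 : Measurable g1) :
    (P {ω | D ≤ (V ω - (if 0 ≤ f (V ω) + W ω then g0 (U ω) else g1 (U ω))) ^ 2}).toReal =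
      (1 / (σv * σu)) *
        ∫ u, ∫ v, jointPhi r (v / σv) (u / σu) * outageG σw D g0 g1 u v (f v) := by
  obtain ⟨hr1, hr2⟩ := hr
  have hr' : (0:ℝ) < 1 - r ^ 2 := by nlinarith
  unfold JointGaussianVU at hVU
  unfold GaussianNoise at hW
  -- the joint density and the outage integrand as functions on ℝ × ℝ
  set dens : ℝ × ℝ → ℝ := fun p => (1 / (σv * σu)) * jointPhi r (p.1 / σv) (p.2 / σu)
    with hdens
  set G : ℝ × ℝ → ℝ := fun p => outageG σw D g0 g1 p.2 p.1 (f p.1) with hGdef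
  have hjp : ∀ v u : ℝ, 0 ≤ jointPhi r v u := fun v u => by
    unfold jointPhi
    have h2 : (0:ℝ) < Real.sqrt (1 - r ^ 2) := Real.sqrt_pos.mpr hr'
    positivity
  have hdens_nonneg : ∀ p, 0 ≤ dens p := fun p =>
    mul_nonneg (by positivity) (hjp _ _)
  have hdens_meas : Measurable dens := by
    simp only [hdens]; unfold jointPhi; fun_prop
  have hG_nonneg : ∀ p, 0 ≤ G p := fun p => by
    simp only [hGdef, outageG]
    split_ifs <;> first | exact gaussQ_nonneg _ | norm_num
  have hG_le_one : ∀ p, G p ≤ 1 := fun p => by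
    simp only [hGdef, outageG]
    split_ifs <;> first | exact gaussQ_le_one _ | norm_num
  have hG_meas : Measurable G := by
    simp only [hGdef, outageG]
    have m0 : MeasurableSet {p : ℝ × ℝ | (p.1 - g0 p.2) ^ 2 < D} :=
      measurableSet_lt ((measurable_fst.sub (hg0.comp measurable_snd)).pow_const 2)
        measurable_const
    have m1 : MeasurableSet {p : ℝ × ℝ | (p.1 - g1 p.2) ^ 2 < D} :=
      measurableSet_lt ((measurable_fst.sub (hg1.comp measurable_snd)).pow_const 2)
        measurable_const
    have mq0 : Measurable fun p : ℝ × ℝ => gaussQ (f p.1 / σw) :=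
      gaussQ_measurable.comp ((hf.comp measurable_fst).div_const σw)
    have mq1 : Measurable fun p : ℝ × ℝ => gaussQ (-f p.1 / σw) :=
      gaussQ_measurable.comp ((hf.comp measurable_fst).neg.div_const σw)
    exact Measurable.ite (m0.inter m1.compl) mq0
      (Measurable.ite (m1.inter m0.compl) mq1
        (Measurable.ite (m0.compl.inter m1.compl) measurable_const measurable_const))
  -- the outage event as a set on ((ℝ × ℝ) × ℝ)
  set S : Set ((ℝ × ℝ) × ℝ) :=
    {q | D ≤ (q.1.1 - (if 0 ≤ f q.1.1 + q.2 then g0 q.1.2 else g1 q.1.2)) ^ 2} with hSdef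
  have hSm : MeasurableSet S := by
    have hrepr : S = ({q : (ℝ × ℝ) × ℝ | 0 ≤ f q.1.1 + q.2} ∩
          {q | D ≤ (q.1.1 - g0 q.1.2) ^ 2}) ∪
        ({q : (ℝ × ℝ) × ℝ | 0 ≤ f q.1.1 + q.2}ᶜ ∩ {q | D ≤ (q.1.1 - g1 q.1.2) ^ 2}) := by
      ext q
      by_cases h : 0 ≤ f q.1.1 + q.2 <;> simp [hSdef, h]
    rw [hrepr]
    have hc : MeasurableSet {q : (ℝ × ℝ) × ℝ | 0 ≤ f q.1.1 + q.2} :=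
      measurableSet_le measurable_const
        ((hf.comp (measurable_fst.comp measurable_fst)).add measurable_snd)
    have h0 : MeasurableSet {q : (ℝ × ℝ) × ℝ | D ≤ (q.1.1 - g0 q.1.2) ^ 2} :=
      measurableSet_le measurable_const
        (((measurable_fst.comp measurable_fst).sub
          (hg0.comp (measurable_snd.comp measurable_fst))).pow_const 2)
    have h1 : MeasurableSet {q : (ℝ × ℝ) × ℝ | D ≤ (q.1.1 - g1 q.1.2) ^ 2} :=
      measurableSet_le measurable_const
        (((measurable_fst.comp measurable_fst).sub
          (hg1.comp (measurable_snd.comp measurable_fst))).pow_const 2)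
    exact (hc.inter h0).union (hc.compl.inter h1)
  -- Gaussian tail measures
  have hν_Iio : ∀ t : ℝ, P.map W (Set.Iio t) = ENNReal.ofReal (gaussQ (-t / σw)) := by
    intro t
    rw [hW, withDensity_apply _ measurableSet_Iio,
      ← ofReal_integral_eq_lintegral_ofReal ((gdens_integrable hσw).integrableOn)
        (Filter.Eventually.of_forall fun w => by positivity),
      setIntegral_congr_set Iio_ae_eq_Iic, gauss_tail_Iic hσw t]
  have hν_Ici : ∀ t : ℝ, P.map W (Set.Ici t) = ENNReal.ofReal (gaussQ (t / σw)) := by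
    intro t
    rw [hW, withDensity_apply _ measurableSet_Ici,
      ← ofReal_integral_eq_lintegral_ofReal ((gdens_integrable hσw).integrableOn)
        (Filter.Eventually.of_forall fun w => by positivity),
      ← setIntegral_congr_set Ioi_ae_eq_Ici, gauss_tail_Ioi hσw t]
  have hνprob : IsProbabilityMeasure (P.map W) := Measure.isProbabilityMeasure_map hWm.aemeasurable
  -- slice computation
  have hslice : ∀ p : ℝ × ℝ, (P.map W) (Prod.mk p ⁻¹' S) = ENNReal.ofReal (G p) := by
    rintro ⟨v, u⟩
    have hset : Prod.mk (v, u) ⁻¹' S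
        = {w : ℝ | D ≤ (v - (if 0 ≤ f v + w then g0 u else g1 u)) ^ 2} := rfl
    by_cases ha : (v - g0 u) ^ 2 < D <;> by_cases hb : (v - g1 u) ^ 2 < D
    · have he : Prod.mk (v, u) ⁻¹' S = (∅ : Set ℝ) := by
        ext w
        simp only [hset, mem_setOf_eq, mem_empty_iff_false, iff_false, not_le]
        split_ifs <;> assumption
      have hGv : G (v, u) = 0 := by
        simp [hGdef, outageG, ha, hb, not_le.mpr ha, not_le.mpr hb]
      rw [he, measure_empty, hGv]
      simp
    · have he : Prod.mk (v, u) ⁻¹' S = Set.Iio (-f v) := by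
        ext w
        simp only [hset, mem_setOf_eq, mem_Iio]
        constructor
        · intro h
          by_contra hw
          push_neg at hw
          rw [if_pos (by linarith)] at h
          exact absurd h (not_le.mpr ha)
        · intro hw
          rw [if_neg (by intro h; linarith)]
          exact not_lt.mp hb
      have hGv : G (v, u) = gaussQ (f v / σw) := by
        simp [hGdef, outageG, ha, hb, not_le.mpr ha, not_lt.mp hb]
      rw [he, hν_Iio, hGv, neg_neg]
    · have he : Prod.mk (v, u) ⁻¹' S = Set.Ici (-f v) := by
        ext w
        simp only [hset, mem_setOf_eq, mem_Ici]
        constructor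
        · intro h
          by_contra hw
          push_neg at hw
          rw [if_neg (by intro h'; linarith)] at h
          exact absurd h (not_le.mpr hb)
        · intro hw
          rw [if_pos (by linarith)]
          exact not_lt.mp ha
      have hGv : G (v, u) = gaussQ (-f v / σw) := by
        simp [hGdef, outageG, ha, hb, not_lt.mp ha, not_le.mpr hb]
      rw [he, hν_Ici, hGv]
    · have he : Prod.mk (v, u) ⁻¹' S = (univ : Set ℝ) := by
        ext w
        simp only [hset, mem_setOf_eq, mem_univ, iff_true]
        split_ifs
        · exact not_lt.mp ha
        · exact not_lt.mp hb
      have hGv : G (v, u) = 1 := by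
        simp [hGdef, outageG, ha, hb, not_lt.mp ha, not_lt.mp hb]
      rw [he, measure_univ, hGv]
      simp
  -- event probability as a lintegral w.r.t. the joint density
  have hmap : P.map (fun ω => ((V ω, U ω), W ω))
      = (P.map (fun ω => (V ω, U ω))).prod (P.map W) :=
    (indepFun_iff_map_prod_eq_prod_map_map (hV.prodMk hU).aemeasurable
      hWm.aemeasurable).mp hindep
  have hA : {ω | D ≤ (V ω - (if 0 ≤ f (V ω) + W ω then g0 (U ω) else g1 (U ω))) ^ 2}
      = (fun ω => ((V ω, U ω), W ω)) ⁻¹' S := rfl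
  have hPA : P {ω | D ≤ (V ω - (if 0 ≤ f (V ω) + W ω then g0 (U ω) else g1 (U ω))) ^ 2}
      = ∫⁻ p, ENNReal.ofReal (dens p * G p) ∂(volume : Measure (ℝ × ℝ)) := by
    rw [hA, ← Measure.map_apply ((hV.prodMk hU).prodMk hWm) hSm, hmap,
      Measure.prod_apply hSm]
    rw [show (∫⁻ p, (P.map W) (Prod.mk p ⁻¹' S) ∂(P.map fun ω => (V ω, U ω)))
        = ∫⁻ p, ENNReal.ofReal (G p) ∂(P.map fun ω => (V ω, U ω)) from
      lintegral_congr hslice]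
    rw [hVU, lintegral_withDensity_eq_lintegral_mul _ hdens_meas.ennreal_ofReal
      hG_meas.ennreal_ofReal]
    exact lintegral_congr fun p => (ENNReal.ofReal_mul (hdens_nonneg p)).symm
  -- finiteness
  have hbound : ∀ p : ℝ × ℝ, ENNReal.ofReal (dens p * G p) ≤ ENNReal.ofReal (dens p) :=
    fun p => ENNReal.ofReal_le_ofReal
      (mul_le_of_le_one_right (hdens_nonneg p) (hG_le_one p))
  have hμprob : IsProbabilityMeasure (P.map fun ω => (V ω, U ω)) :=
    Measure.isProbabilityMeasure_map (hV.prodMk hU).aemeasurable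
  have htot : ∫⁻ p, ENNReal.ofReal (dens p) ∂(volume : Measure (ℝ × ℝ)) = 1 := by
    calc ∫⁻ p, ENNReal.ofReal (dens p) ∂(volume : Measure (ℝ × ℝ))
        = (volume : Measure (ℝ × ℝ)).withDensity (fun p => ENNReal.ofReal (dens p)) univ := by
          rw [withDensity_apply _ MeasurableSet.univ, setLIntegral_univ]
      _ = P.map (fun ω => (V ω, U ω)) univ := by rw [hVU]
      _ = 1 := measure_univ
  have hfin : ∫⁻ p, ENNReal.ofReal (dens p * G p) ∂(volume : Measure (ℝ × ℝ)) ≤ 1 :=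
    htot ▸ lintegral_mono hbound
  -- integrability of the real integrand
  have hmeas2 : Measurable fun p : ℝ × ℝ => dens p * G p := hdens_meas.mul hG_meas
  have h_int : Integrable (fun p : ℝ × ℝ => dens p * G p) := by
    refine ⟨hmeas2.aestronglyMeasurable, ?_⟩
    rw [hasFiniteIntegral_iff_norm]
    have hn : ∀ p : ℝ × ℝ, ENNReal.ofReal ‖dens p * G p‖ = ENNReal.ofReal (dens p * G p) :=
      fun p => by rw [Real.norm_of_nonneg (mul_nonneg (hdens_nonneg p) (hG_nonneg p))]
    simp_rw [hn]
    exact lt_of_le_of_lt hfin ENNReal.one_lt_top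
  -- Bochner integral equals lintegral
  have key : ∫ p : ℝ × ℝ, dens p * G p
      = (∫⁻ p, ENNReal.ofReal (dens p * G p) ∂(volume : Measure (ℝ × ℝ))).toReal :=
    integral_eq_lintegral_of_nonneg_ae
      (Filter.Eventually.of_forall fun p => mul_nonneg (hdens_nonneg p) (hG_nonneg p))
      hmeas2.aestronglyMeasurable
  -- Fubini
  have hvol : (volume : Measure (ℝ × ℝ)) = (volume : Measure ℝ).prod volume :=
    rfl
  have h_int' : Integrable (fun p : ℝ × ℝ => dens p * G p)
      ((volume : Measure ℝ).prod volume) := hvol ▸ h_int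
  have hswap : ∫ p : ℝ × ℝ, dens p * G p = ∫ u, ∫ v, dens (v, u) * G (v, u) := by
    calc ∫ p : ℝ × ℝ, dens p * G p
        = ∫ p, dens p * G p ∂((volume : Measure ℝ).prod volume) := by rw [← hvol]
      _ = ∫ v, ∫ u, dens (v, u) * G (v, u) := integral_prod _ h_int'
      _ = ∫ u, ∫ v, dens (v, u) * G (v, u) := integral_integral_swap h_int'
  -- finish
  rw [hPA, ← key, hswap]
  simp only [hdens, hGdef]
  simp_rw [mul_assoc, integral_const_mul]
end
end

section
/- Let V be Gaussian with mean zero and variance σ_v² > 0, let α ∈ ℝ and β > 0, and let f_PLT(v) = α(−1)^{⌊v/β + 1/2⌋}(β⌊v/β + 1/2⌋ − v). Then E[f_PLT(V)²] = α² ( σ_v² + β² Σ_{i∈ℤ} i² ( Q((−β/2 + iβ)/σ_v) − Q((β/2 + iβ)/σ_v) ) − (2βσ_v/√(2π)) Σ_{i∈ℤ} i ( e^{−(−β/2+iβ)²/(2σ_v²)} − e^{−(β/2+iβ)²/(2σ_v²)} ) ), where both series converge absolutely. -/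
/-! The encoder is affine on each cell `[(i - 1/2)β, (i + 1/2)β)` of the partition by
`⌊v/β + 1/2⌋ = i`: there `f_PLT(v)² = α² (β²i² - 2βi v + v²)`. Integrating cell by cell against
the law of `V` and summing over `i` turns the three terms into the second moment `σ²`, the cell
probabilities `Q(·) - Q(·)`, and the first moments of the cells, which are explicit because
`x φ(x) = -σ² φ'(x)` for the centred Gaussian density `φ`. On the `i`-th cell `|i| ≤ (|v| + β)/β`,
so both series are dominated cellwise by an integrable multiple of `(|v| + β)²`. -/

open MeasureTheory ProbabilityTheory Real

noncomputable section

/-- The periodic linear transmission (PLT) encoder with slope `α` and period `β`: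
`f_PLT(v) = α (-1)^⌊v/β + 1/2⌋ (β ⌊v/β + 1/2⌋ - v)`. -/
def fPLT (α β v : ℝ) : ℝ :=
  α * (-1 : ℝ) ^ ⌊v / β + 1 / 2⌋ * (β * (⌊v / β + 1 / 2⌋ : ℤ) - v)

open Set

def pltCell (β : ℝ) (i : ℤ) : Set ℝ := Ico (-(β / 2) + i * β) (β / 2 + i * β)

theorem abs_fPLT (α β x : ℝ) : |fPLT α β x| = |α| * |β * ⌊x / β + 1 / 2⌋ - x| := by
  rw [fPLT, abs_mul, abs_mul, abs_neg_one_zpow, mul_one]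

theorem measurableSet_pltCell (β : ℝ) (i : ℤ) : MeasurableSet (pltCell β i) :=
  measurableSet_Ico

section Cells

variable {β : ℝ} (hβ : 0 < β)
include hβ

theorem floor_eq_iff_mem_pltCell {x : ℝ} {i : ℤ} : ⌊x / β + 1 / 2⌋ = i ↔ x ∈ pltCell β i := by
  rw [Int.floor_eq_iff, pltCell, mem_Ico, ← sub_le_iff_le_add, ← lt_sub_iff_add_lt,
    le_div_iff₀ hβ, div_lt_iff₀ hβ]
  constructor <;> rintro ⟨h₁, h₂⟩ <;> constructor <;> linarith

theorem mem_pltCell_floor (x : ℝ) : x ∈ pltCell β ⌊x / β + 1 / 2⌋ :=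
  (floor_eq_iff_mem_pltCell hβ).1 rfl

theorem pairwise_disjoint_pltCell : Pairwise (Function.onFun Disjoint (pltCell β)) :=
  fun _ _ hij => disjoint_left.2 fun _ hi hj =>
    hij (((floor_eq_iff_mem_pltCell hβ).2 hi).symm.trans ((floor_eq_iff_mem_pltCell hβ).2 hj))

theorem iUnion_pltCell : ⋃ i, pltCell β i = univ :=
  eq_univ_of_forall fun x => mem_iUnion.2 ⟨_, mem_pltCell_floor hβ x⟩

omit hβ in
theorem abs_sub_le_of_mem_pltCell {x : ℝ} {i : ℤ} (hx : x ∈ pltCell β i) :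
    |β * i - x| ≤ β / 2 := by
  obtain ⟨h₁, h₂⟩ := hx
  rw [abs_le]; constructor <;> linarith

theorem abs_intCast_le_of_mem_pltCell {x : ℝ} {i : ℤ} (hx : x ∈ pltCell β i) :
    |(i : ℝ)| ≤ β⁻¹ * (|x| + β) := by
  have := abs_sub_le_of_mem_pltCell hx
  have := abs_sub_abs_le_abs_sub (β * i) x
  rw [abs_mul, abs_of_pos hβ] at this
  rw [le_inv_mul_iff₀ hβ]
  linarith

theorem fPLT_sq_of_mem_pltCell (α : ℝ) {x : ℝ} {i : ℤ} (hx : x ∈ pltCell β i) :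
    fPLT α β x ^ 2 = α ^ 2 * (β * i - x) ^ 2 := by
  rw [← sq_abs, abs_fPLT, (floor_eq_iff_mem_pltCell hβ).2 hx, mul_pow, sq_abs, sq_abs]

theorem abs_fPLT_le (α x : ℝ) : |fPLT α β x| ≤ |α| * (β / 2) := by
  rw [abs_fPLT]
  exact mul_le_mul_of_nonneg_left (abs_sub_le_of_mem_pltCell (mem_pltCell_floor hβ x))
    (abs_nonneg α)

end Cells

theorem measurable_fPLT (α β : ℝ) : Measurable (fPLT α β) := by
  unfold fPLT
  fun_prop

theorem summable_abs_mul_setIntegral_of_abs_le {α ι : Type*} [MeasurableSpace α] [Countable ι]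
    {μ : Measure α} {s : ι → Set α} (hs : ∀ i, MeasurableSet (s i))
    (hd : Pairwise (Function.onFun Disjoint s)) {c : ι → ℝ} {f g : α → ℝ} (hg : Integrable g μ)
    (hfg : ∀ i, ∀ x ∈ s i, |c i * f x| ≤ g x) :
    Summable fun i => |c i * ∫ x in s i, f x ∂μ| := by
  refine Summable.of_nonneg_of_le (fun i => abs_nonneg _) (fun i => ?_)
    (hasSum_integral_iUnion hs hd hg.integrableOn).summable
  rw [← integral_const_mul]
  exact norm_integral_le_of_norm_le (f := fun x => c i * f x) hg.integrableOn
    (ae_restrict_of_forall_mem (hs i) fun x hx => (hfg i x hx : ‖c i * f x‖ ≤ g x))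

section Moments

variable {μ : Measure ℝ} {β : ℝ} (hβ : 0 < β)
include hβ

theorem hasSum_setIntegral_pltCell {f : ℝ → ℝ} (hf : Integrable f μ) :
    HasSum (fun i => ∫ x in pltCell β i, f x ∂μ) (∫ x, f x ∂μ) := by
  have h := hasSum_integral_iUnion (s := pltCell β) (fun _ => measurableSet_pltCell _ _)
    (pairwise_disjoint_pltCell hβ) (hf.integrableOn (s := ⋃ i, pltCell β i))
  rwa [iUnion_pltCell hβ, Measure.restrict_univ] at h

variable [IsFiniteMeasure μ]

theorem integrable_fPLT_sq (α : ℝ) : Integrable (fun x => fPLT α β x ^ 2) μ :=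
  .of_bound ((measurable_fPLT α β).pow_const 2).aestronglyMeasurable ((|α| * (β / 2)) ^ 2)
    (ae_of_all _ fun x => by
      rw [Real.norm_eq_abs, abs_pow]
      exact pow_le_pow_left₀ (abs_nonneg _) (abs_fPLT_le hβ α x) 2)

variable (h2 : MemLp id 2 μ)
include h2

omit hβ in
theorem integrable_sq_inv_mul_abs_add : Integrable (fun x => (β⁻¹ * (|x| + β)) ^ 2) μ :=
  ((h2.norm.add (memLp_const β)).const_mul β⁻¹).integrable_sq

theorem summable_abs_sq_mul_measureReal_pltCell :
    Summable fun i : ℤ => |(i : ℝ) ^ 2 * μ.real (pltCell β i)| := by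
  have h := summable_abs_mul_setIntegral_of_abs_le (fun _ => measurableSet_pltCell _ _)
    (pairwise_disjoint_pltCell hβ) (c := fun i : ℤ => (i : ℝ) ^ 2) (f := fun _ => 1)
    (integrable_sq_inv_mul_abs_add h2) fun i x hx => by
      rw [mul_one, abs_sq, ← sq_abs]
      exact pow_le_pow_left₀ (abs_nonneg _) (abs_intCast_le_of_mem_pltCell hβ hx) 2
  simpa only [setIntegral_const, smul_eq_mul, mul_one] using h

theorem summable_abs_mul_setIntegral_id_pltCell :
    Summable fun i : ℤ => |(i : ℝ) * ∫ x in pltCell β i, x ∂μ| :=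
  summable_abs_mul_setIntegral_of_abs_le (fun _ => measurableSet_pltCell _ _)
    (pairwise_disjoint_pltCell hβ) ((integrable_sq_inv_mul_abs_add h2).const_mul β)
    fun i x hx => by
      have hi := abs_intCast_le_of_mem_pltCell hβ hx
      have hx' : |x| ≤ β * (β⁻¹ * (|x| + β)) := by
        rw [mul_inv_cancel_left₀ hβ.ne']; linarith
      rw [abs_mul]
      calc |(i : ℝ)| * |x| ≤ β⁻¹ * (|x| + β) * (β * (β⁻¹ * (|x| + β))) :=
            mul_le_mul hi hx' (abs_nonneg x) (hi.trans' (abs_nonneg _))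
        _ = β * (β⁻¹ * (|x| + β)) ^ 2 := by ring

theorem setIntegral_fPLT_sq_pltCell (α : ℝ) (i : ℤ) :
    ∫ x in pltCell β i, fPLT α β x ^ 2 ∂μ =
      α ^ 2 * (β ^ 2 * ((i : ℝ) ^ 2 * μ.real (pltCell β i)) -
        2 * β * ((i : ℝ) * ∫ x in pltCell β i, x ∂μ) + ∫ x in pltCell β i, x ^ 2 ∂μ) := by
  have hc : IntegrableOn (fun _ => α ^ 2 * β ^ 2 * (i : ℝ) ^ 2) (pltCell β i) μ :=
    integrableOn_const
  have hx : IntegrableOn (fun x => α ^ 2 * (2 * β * i) * x) (pltCell β i) μ :=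
    ((h2.integrable one_le_two).const_mul _).integrableOn
  have hx2 : IntegrableOn (fun x => α ^ 2 * x ^ 2) (pltCell β i) μ :=
    (h2.integrable_sq.const_mul _).integrableOn
  rw [setIntegral_congr_fun (measurableSet_pltCell β i) fun x hx =>
      (fPLT_sq_of_mem_pltCell hβ α hx).trans
        (by ring : _ = α ^ 2 * β ^ 2 * (i : ℝ) ^ 2 - α ^ 2 * (2 * β * i) * x + α ^ 2 * x ^ 2),
    integral_add ?_ hx2, integral_sub hc hx, setIntegral_const, integral_const_mul,
    integral_const_mul, smul_eq_mul]
  · ring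
  · exact hc.sub hx

theorem integral_fPLT_sq (α : ℝ) :
    ∫ x, fPLT α β x ^ 2 ∂μ =
      α ^ 2 * (∫ x, x ^ 2 ∂μ + β ^ 2 * ∑' i : ℤ, (i : ℝ) ^ 2 * μ.real (pltCell β i) -
        2 * β * ∑' i : ℤ, (i : ℝ) * ∫ x in pltCell β i, x ∂μ) := by
  have hA := (summable_abs_sq_mul_measureReal_pltCell (μ := μ) hβ h2).of_abs.hasSum
  have hB := (summable_abs_mul_setIntegral_id_pltCell (μ := μ) hβ h2).of_abs.hasSum
  have hC : HasSum (fun i => ∫ x in pltCell β i, x ^ 2 ∂μ) (∫ x, x ^ 2 ∂μ) :=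
    hasSum_setIntegral_pltCell hβ h2.integrable_sq
  have hF := hasSum_setIntegral_pltCell hβ (integrable_fPLT_sq (μ := μ) hβ α)
  simp_rw [setIntegral_fPLT_sq_pltCell hβ h2] at hF
  rw [hF.unique ((((hA.mul_left (β ^ 2)).sub (hB.mul_left (2 * β))).add hC).mul_left (α ^ 2))]
  ring

end Moments

theorem integral_sq_gaussianReal (v : NNReal) : ∫ x, x ^ 2 ∂gaussianReal 0 v = v := by
  have h := variance_eq_sub (memLp_id_gaussianReal (μ := 0) (v := v) 2)
  simp only [variance_id_gaussianReal, Pi.pow_apply, id_eq, integral_id_gaussianReal] at h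
  linarith

theorem setIntegral_gaussianReal_eq_setIntegral_mul {m : ℝ} {v : NNReal} (hv : v ≠ 0)
    (f : ℝ → ℝ) (s : Set ℝ) :
    ∫ x in s, f x ∂gaussianReal m v = ∫ x in s, gaussianPDFReal m v x * f x := by
  rw [gaussianReal_of_var_ne_zero _ hv, setIntegral_withDensity_eq_setIntegral_toReal_smul' s
    (measurable_gaussianPDF m v) (ae_of_all _ fun _ => gaussianPDF_lt_top)]
  simp only [toReal_gaussianPDF, smul_eq_mul]

section Centered

variable {σ : ℝ} (hσ : 0 < σ)
include hσ

theorem toNNReal_sq_ne_zero : (σ ^ 2).toNNReal ≠ 0 :=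
  (Real.toNNReal_pos.2 (by positivity)).ne'

theorem gaussianPDFReal_zero_toNNReal_sq (x : ℝ) :
    gaussianPDFReal 0 (σ ^ 2).toNNReal x = (σ * √(2 * π))⁻¹ * exp (-x ^ 2 / (2 * σ ^ 2)) := by
  rw [gaussianPDFReal, Real.coe_toNNReal _ (sq_nonneg σ), sub_zero, mul_comm (2 * π),
    Real.sqrt_mul (sq_nonneg σ), Real.sqrt_sq hσ.le]

theorem gaussianReal_real_Ici (a : ℝ) :
    (gaussianReal 0 (σ ^ 2).toNNReal).real (Ici a) = gaussQ (a / σ) := by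
  have hexp (x : ℝ) : exp (-x ^ 2 / (2 * σ ^ 2)) = exp (-(σ⁻¹ * x) ^ 2 / 2) := by
    congr 1; field_simp
  rw [measureReal_def, gaussianReal_apply_eq_integral _ (toNNReal_sq_ne_zero hσ),
    ENNReal.toReal_ofReal (setIntegral_nonneg measurableSet_Ici fun x _ =>
      gaussianPDFReal_nonneg _ _ x), integral_Ici_eq_integral_Ioi]
  simp_rw [gaussianPDFReal_zero_toNNReal_sq hσ, hexp]
  rw [integral_const_mul, integral_comp_mul_left_Ioi (fun y => exp (-y ^ 2 / 2)) a (inv_pos.2 hσ),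
    gaussQ, smul_eq_mul, inv_inv, inv_mul_eq_div]
  field_simp

theorem gaussianReal_real_Ico {a b : ℝ} (hab : a ≤ b) :
    (gaussianReal 0 (σ ^ 2).toNNReal).real (Ico a b) = gaussQ (a / σ) - gaussQ (b / σ) := by
  rw [← Ici_sdiff_Ici, measureReal_sdiff (Ici_subset_Ici.2 hab) measurableSet_Ici,
    gaussianReal_real_Ici hσ, gaussianReal_real_Ici hσ]

theorem hasDerivAt_gaussianPDFReal_zero_toNNReal_sq (x : ℝ) :
    HasDerivAt (fun y => -σ ^ 2 * gaussianPDFReal 0 (σ ^ 2).toNNReal y)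
      (gaussianPDFReal 0 (σ ^ 2).toNNReal x * x) x := by
  have h : HasDerivAt (fun y : ℝ => -y ^ 2 / (2 * σ ^ 2)) (-(2 * x) / (2 * σ ^ 2)) x := by
    simpa using (hasDerivAt_pow 2 x).neg.div_const (2 * σ ^ 2)
  simp_rw [gaussianPDFReal_zero_toNNReal_sq hσ, ← mul_assoc]
  exact (h.exp.const_mul _).congr_deriv (by field_simp)

theorem setIntegral_id_gaussianReal_Ico {a b : ℝ} (hab : a ≤ b) :
    ∫ x in Ico a b, x ∂gaussianReal 0 (σ ^ 2).toNNReal =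
      σ / √(2 * π) * (exp (-a ^ 2 / (2 * σ ^ 2)) - exp (-b ^ 2 / (2 * σ ^ 2))) := by
  have hcont : Continuous fun x => gaussianPDFReal 0 (σ ^ 2).toNNReal x * x := by
    unfold gaussianPDFReal; fun_prop
  rw [setIntegral_gaussianReal_eq_setIntegral_mul (toNNReal_sq_ne_zero hσ),
    integral_Ico_eq_integral_Ioo, ← integral_Ioc_eq_integral_Ioo,
    ← intervalIntegral.integral_of_le hab,
    intervalIntegral.integral_eq_sub_of_hasDerivAt
      (fun x _ => hasDerivAt_gaussianPDFReal_zero_toNNReal_sq hσ x) (hcont.intervalIntegrable a b),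
    gaussianPDFReal_zero_toNNReal_sq hσ, gaussianPDFReal_zero_toNNReal_sq hσ]
  field_simp
  ring

end Centered

theorem plt_average_power_general
    {Ω : Type*} [MeasurableSpace Ω] (P : Measure Ω)
    (σv α β : ℝ) (hσv : 0 < σv) (hβ : 0 < β)
    (V : Ω → ℝ) (hV : Measurable V)
    (hVlaw : P.map V = gaussianReal 0 ((σv ^ 2).toNNReal)) :
    Summable (fun i : ℤ =>
        |(i : ℝ) ^ 2 * (gaussQ ((-(β / 2) + i * β) / σv) - gaussQ ((β / 2 + i * β) / σv))|) ∧
      Summable (fun i : ℤ =>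
        |(i : ℝ) * (Real.exp (-(-(β / 2) + i * β) ^ 2 / (2 * σv ^ 2)) -
          Real.exp (-(β / 2 + i * β) ^ 2 / (2 * σv ^ 2)))|) ∧
      (∫ ω, fPLT α β (V ω) ^ 2 ∂P) =
        α ^ 2 * (σv ^ 2 +
          β ^ 2 * ∑' i : ℤ,
            (i : ℝ) ^ 2 * (gaussQ ((-(β / 2) + i * β) / σv) - gaussQ ((β / 2 + i * β) / σv)) -
          (2 * β * σv / Real.sqrt (2 * π)) * ∑' i : ℤ,
            (i : ℝ) * (Real.exp (-(-(β / 2) + i * β) ^ 2 / (2 * σv ^ 2)) -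
              Real.exp (-(β / 2 + i * β) ^ 2 / (2 * σv ^ 2)))) := by
  set μ := gaussianReal 0 (σv ^ 2).toNNReal
  have h2 : MemLp id 2 μ := memLp_id_gaussianReal 2
  have hcell (i : ℤ) : -(β / 2) + i * β ≤ β / 2 + i * β := by linarith
  have hmass (i : ℤ) : μ.real (pltCell β i) =
      gaussQ ((-(β / 2) + i * β) / σv) - gaussQ ((β / 2 + i * β) / σv) :=
    gaussianReal_real_Ico hσv (hcell i)
  have hmean (i : ℤ) : exp (-(-(β / 2) + i * β) ^ 2 / (2 * σv ^ 2)) -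
      exp (-(β / 2 + i * β) ^ 2 / (2 * σv ^ 2)) =
      √(2 * π) / σv * ∫ x in pltCell β i, x ∂μ := by
    rw [pltCell, setIntegral_id_gaussianReal_Ico hσv (hcell i)]
    field_simp
  refine ⟨?_, ?_, ?_⟩
  · simpa only [hmass] using summable_abs_sq_mul_measureReal_pltCell hβ h2
  · refine ((summable_abs_mul_setIntegral_id_pltCell hβ h2).mul_left (√(2 * π) / σv)).congr
      fun i => ?_
    have hc : 0 < √(2 * π) / σv := by positivity
    rw [hmean, mul_left_comm (i : ℝ), abs_mul (√(2 * π) / σv), abs_of_pos hc]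
  · rw [← integral_map hV.aemeasurable ((measurable_fPLT α β).pow_const 2).aestronglyMeasurable,
      hVlaw, integral_fPLT_sq hβ h2, integral_sq_gaussianReal, Real.coe_toNNReal _ (sq_nonneg σv)]
    simp_rw [hmass, hmean, mul_left_comm _ (√(2 * π) / σv), tsum_mul_left]
    rw [← mul_assoc, show 2 * β * σv / √(2 * π) * (√(2 * π) / σv) = 2 * β by field_simp]

/-- Average power of the PLT encoder for a zero-mean Gaussian source with variance `σv²`:
both series converge absolutely and
`E[f_PLT(V)²] = α² (σv² + β² Σ_{i∈ℤ} i² (Q((-β/2+iβ)/σv) - Q((β/2+iβ)/σv))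
  - (2βσv/√(2π)) Σ_{i∈ℤ} i (e^{-(-β/2+iβ)²/(2σv²)} - e^{-(β/2+iβ)²/(2σv²)}))`. -/
theorem plt_average_power
    {Ω : Type*} [MeasurableSpace Ω] (P : Measure Ω) [IsProbabilityMeasure P]
    (σv α β : ℝ) (hσv : 0 < σv) (hβ : 0 < β)
    (V : Ω → ℝ) (hV : Measurable V)
    (hVlaw : P.map V = gaussianReal 0 ((σv ^ 2).toNNReal)) :
    Summable (fun i : ℤ =>
        |(i : ℝ) ^ 2 * (gaussQ ((-(β / 2) + i * β) / σv) - gaussQ ((β / 2 + i * β) / σv))|) ∧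
      Summable (fun i : ℤ =>
        |(i : ℝ) * (Real.exp (-(-(β / 2) + i * β) ^ 2 / (2 * σv ^ 2)) -
          Real.exp (-(β / 2 + i * β) ^ 2 / (2 * σv ^ 2)))|) ∧
      (∫ ω, fPLT α β (V ω) ^ 2 ∂P) =
        α ^ 2 * (σv ^ 2 +
          β ^ 2 * ∑' i : ℤ,
            (i : ℝ) ^ 2 * (gaussQ ((-(β / 2) + i * β) / σv) - gaussQ ((β / 2 + i * β) / σv)) -
          (2 * β * σv / Real.sqrt (2 * π)) * ∑' i : ℤ,
            (i : ℝ) * (Real.exp (-(-(β / 2) + i * β) ^ 2 / (2 * σv ^ 2)) -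
              Real.exp (-(β / 2 + i * β) ^ 2 / (2 * σv ^ 2)))) :=
  plt_average_power_general P σv α β hσv hβ V hV hVlaw
end
end
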